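/- (Lemma on exit times of exhausted open sets.) Let X be a topological space, ω : [0,∞) → X a continuous path, Ω ⊆ X open, and let Ω_n ⊆ Ω, n ∈ ℕ, be open sets with Ω_n ⊆ Ω_{n+1} for all n, ω(0) ∈ Ω_1, and ⋃_{n∈ℕ} Ω_n = Ω. Then the sequence α_{Ω_n}(ω) is nondecreasing and α_{Ω_n}(ω) → α_Ω(ω) as n → ∞ (equivalently, sup_n α_{Ω_n}(ω) = α_Ω(ω) in [0,∞]). -/

import Mathlib

open MeasureTheory Set
open scoped ENNReal

/-- First exit time of the path `ω` from `U`: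
`α_U(ω) = inf {t > 0 : ω t ∉ U}`, valued in `[0,∞]` with `inf ∅ = ∞`. -/
noncomputable def exitTime {X : Type*} (ω : ℝ → X) (U : Set X) : ℝ≥0∞ :=
  sInf (ENNReal.ofReal '' {r : ℝ | 0 < r ∧ ω r ∉ U})

/-- First penetration time of the path `ω` into the complement of `U`:
`β_U(ω) = inf {t > 0 : λ({s ∈ [0,t] : ω s ∉ U}) > 0}`, valued in `[0,∞]`
with `inf ∅ = ∞`, where `λ` is the Lebesgue outer measure. -/
noncomputable def penTime {X : Type*} (ω : ℝ → X) (U : Set X) : ℝ≥0∞ :=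
  sInf (ENNReal.ofReal ''
    {r : ℝ | 0 < r ∧ 0 < volume {s : ℝ | s ∈ Icc 0 r ∧ ω s ∉ U}})

/-!
Up to any time `T` strictly before the exit from `Ω`, the path stays in `Ω` on `[0, T]`
(for `t = 0` this is the hypothesis on `ω 0`). The image of `[0, T]` is compact, so it is
already covered by one of the increasing open sets `Ωₙ`, whose exit time is then at least `T`.
-/

open scoped NNReal

section ExitTime

variable {X : Type*} {ω : ℝ → X}

theorem exitTime_mono {U V : Set X} (h : U ⊆ V) : exitTime ω U ≤ exitTime ω V :=
  sInf_le_sInf <| image_mono fun _ ⟨hr, hrU⟩ => ⟨hr, fun hrV => hrU (h hrV)⟩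

theorem le_exitTime_of_mapsTo {U : Set X} {T : ℝ} (h : MapsTo ω (Ioo 0 T) U) :
    ENNReal.ofReal T ≤ exitTime ω U := by
  refine le_sInf ?_
  rintro _ ⟨r, ⟨hr, hrU⟩, rfl⟩
  exact ENNReal.ofReal_le_ofReal <| not_lt.mp fun hrT => hrU (h ⟨hr, hrT⟩)

theorem mapsTo_Icc_of_lt_exitTime {U : Set X} {T : ℝ≥0} (h0 : ω 0 ∈ U)
    (hT : (T : ℝ≥0∞) < exitTime ω U) : MapsTo ω (Icc 0 T) U := by
  intro t ⟨ht0, htT⟩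
  rcases ht0.eq_or_lt with rfl | ht0
  · exact h0
  by_contra htU
  have : exitTime ω U ≤ T :=
    calc exitTime ω U ≤ ENNReal.ofReal t := sInf_le ⟨t, ⟨ht0, htU⟩, rfl⟩
      _ ≤ ENNReal.ofReal T := ENNReal.ofReal_le_ofReal htT
      _ = T := ENNReal.ofReal_coe_nnreal
  exact this.not_gt hT

theorem exitTime_iUnion_of_directed [TopologicalSpace X] {ι : Type*}
    (hω : ContinuousOn ω (Ici 0)) {U : ι → Set X} (hU : ∀ i, IsOpen (U i))
    (hdir : Directed (· ⊆ ·) U) (h0 : ω 0 ∈ ⋃ i, U i) :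
    exitTime ω (⋃ i, U i) = ⨆ i, exitTime ω (U i) := by
  refine le_antisymm ?_ (iSup_le fun i => exitTime_mono (subset_iUnion U i))
  have : Nonempty ι := let ⟨i, _⟩ := mem_iUnion.mp h0; ⟨i⟩
  refine ENNReal.le_of_forall_pos_nnreal_lt fun T _ hT => ?_
  have hK : IsCompact (ω '' Icc 0 T) :=
    isCompact_Icc.image_of_continuousOn (hω.mono Icc_subset_Ici_self)
  obtain ⟨i, hi⟩ := hK.elim_directed_cover U hU
    (mapsTo_Icc_of_lt_exitTime h0 hT).image_subset hdir
  calc (T : ℝ≥0∞) = ENNReal.ofReal T := ENNReal.ofReal_coe_nnreal.symm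
    _ ≤ exitTime ω (U i) :=
      le_exitTime_of_mapsTo fun t ht => hi (mem_image_of_mem ω (Ioo_subset_Icc_self ht))
    _ ≤ ⨆ i, exitTime ω (U i) := le_iSup (fun j => exitTime ω (U j)) i

end ExitTime

theorem exitTime_exhaustion_general
    {X : Type*} [TopologicalSpace X] (ω : ℝ → X)
    (hω : ContinuousOn ω (Ici (0 : ℝ)))
    (Ω : Set X)
    (Ωn : ℕ → Set X) (hΩn : ∀ n, IsOpen (Ωn n))
    (hmono : ∀ n, Ωn n ⊆ Ωn (n + 1))
    (h0 : ω 0 ∈ Ωn 0)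
    (hUnion : (⋃ n, Ωn n) = Ω) :
    Monotone (fun n => exitTime ω (Ωn n)) ∧
      (⨆ n, exitTime ω (Ωn n)) = exitTime ω Ω := by
  have hΩmono : Monotone Ωn := monotone_nat_of_le_succ hmono
  refine ⟨fun m n hmn => exitTime_mono (hΩmono hmn), ?_⟩
  rw [← hUnion]
  exact (exitTime_iUnion_of_directed hω hΩn hΩmono.directed_le (mem_iUnion_of_mem 0 h0)).symm

theorem exitTime_exhaustion
    {X : Type*} [TopologicalSpace X] (ω : ℝ → X)
    (hω : ContinuousOn ω (Ici (0 : ℝ)))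
    (Ω : Set X) (hΩ : IsOpen Ω)
    (Ωn : ℕ → Set X) (hΩn : ∀ n, IsOpen (Ωn n))
    (hsub : ∀ n, Ωn n ⊆ Ω)
    (hmono : ∀ n, Ωn n ⊆ Ωn (n + 1))
    (h0 : ω 0 ∈ Ωn 0)
    (hUnion : (⋃ n, Ωn n) = Ω) :
    Monotone (fun n => exitTime ω (Ωn n)) ∧
      (⨆ n, exitTime ω (Ωn n)) = exitTime ω Ω :=
  exitTime_exhaustion_general ω hω Ω Ωn hΩn hmono h0 hUnion
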